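/- Let C ⊆ {0,1}^n be a 1-perfect code, i.e., every radius-1 ball in Q_n contains exactly one element of C (this requires n = 2^m − 1). Then the punctured code C* ⊆ {0,1}^{n-1}, obtained by deleting the last coordinate of every codeword, is an orthogonal array OA(2^n/(n+1), n−1, 2, (n−1)/2). -/
import Mathlib

def stmtEps (b : Fin 2) : ℤ := if b = 0 then 1 else -1

lemma stmtEps_add (a b : Fin 2) : stmtEps (a + b) = stmtEps a * stmtEps b := by
  fin_cases a <;> fin_cases b <;> simp [stmtEps]

lemma stmtEps_succ (a : Fin 2) : stmtEps (a + 1) = - stmtEps a := by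
  fin_cases a <;> simp [stmtEps]

lemma stmtEps_sum : ∑ b : Fin 2, stmtEps b = 0 := by
  simp [Fin.sum_univ_two, stmtEps]

lemma fin2_ne_iff {a b : Fin 2} (h : a ≠ b) : a = b + 1 := by
  fin_cases a <;> fin_cases b <;> simp_all

-- sum over all vectors of a nontrivial character is zero
lemma sum_chi_univ {n : ℕ} (r : Finset (Fin n)) (hr : r.Nonempty) :
    ∑ v : Fin n → Fin 2, ∏ i ∈ r, stmtEps (v i) = 0 := by
  have h1 : ∀ v : Fin n → Fin 2, ∏ i ∈ r, stmtEps (v i)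
      = ∏ i : Fin n, (if i ∈ r then stmtEps (v i) else 1) := by
    intro v
    rw [Finset.prod_ite_mem, Finset.univ_inter]
  calc ∑ v : Fin n → Fin 2, ∏ i ∈ r, stmtEps (v i)
      = ∑ v : Fin n → Fin 2, ∏ i : Fin n, (if i ∈ r then stmtEps (v i) else 1) := by
        exact Finset.sum_congr rfl fun v _ => h1 v
    _ = ∏ i : Fin n, ∑ b : Fin 2, (if i ∈ r then stmtEps b else 1) := by
        rw [Finset.prod_univ_sum]
        rw [Fintype.piFinset_univ]
    _ = 0 := by
        obtain ⟨i0, hi0⟩ := hr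
        apply Finset.prod_eq_zero (Finset.mem_univ i0)
        have := stmtEps_sum
        simp only [hi0, if_true]
        rw [Fin.sum_univ_two] at this ⊢
        exact this

lemma fin2_self_ne_succ (a : Fin 2) : a ≠ a + 1 := by fin_cases a <;> decide

lemma my_ball_eq {n : ℕ} (c : Fin n → Fin 2) :
    Finset.univ.filter (fun v => hammingDist v c ≤ 1)
      = insert c (Finset.univ.image (fun i : Fin n => Function.update c i (c i + 1))) := by
  ext v
  simp only [Finset.mem_filter, Finset.mem_univ, true_and, Finset.mem_insert,
    Finset.mem_image, exists_prop]
  constructor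
  · intro hv
    by_cases hvc : v = c
    · exact Or.inl hvc
    · right
      have : ∃ i, v i ≠ c i := by
        by_contra h
        push_neg at h
        exact hvc (funext h)
      obtain ⟨i, hi⟩ := this
      refine ⟨i, ?_⟩
      symm
      funext j
      rcases eq_or_ne j i with rfl | hji
      · rw [Function.update_self]
        exact (fin2_ne_iff hi).symm ▸ rfl
      · rw [Function.update_of_ne hji]
        by_contra hj
        have hsub : ({i, j} : Finset (Fin n)) ⊆ Finset.univ.filter (fun k => v k ≠ c k) := by
          intro k hk
          simp only [Finset.mem_insert, Finset.mem_singleton] at hk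
          rcases hk with rfl | rfl <;> simp [hi, hj]
        have h2 : ({i, j} : Finset (Fin n)).card = 2 := by
          rw [Finset.card_pair (Ne.symm hji)]
        have := Finset.card_le_card hsub
        rw [h2] at this
        unfold hammingDist at hv
        omega
  · intro hv
    rcases hv with rfl | ⟨i, rfl⟩
    · simp
    · have hsub : Finset.univ.filter (fun k => Function.update c i (c i + 1) k ≠ c k)
          ⊆ {i} := by
        intro k hk
        simp only [Finset.mem_filter, Finset.mem_univ, true_and] at hk
        simp only [Finset.mem_singleton]
        by_contra hki
        exact hk (Function.update_of_ne hki _ _)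
      calc hammingDist (Function.update c i (c i + 1)) c
          = (Finset.univ.filter (fun k => Function.update c i (c i + 1) k ≠ c k)).card := rfl
        _ ≤ ({i} : Finset (Fin n)).card := Finset.card_le_card hsub
        _ = 1 := Finset.card_singleton i

lemma update_not_self {n : ℕ} (c : Fin n → Fin 2) (i : Fin n) :
    Function.update c i (c i + 1) ≠ c := by
  intro h
  have := congrFun h i
  rw [Function.update_self] at this
  exact fin2_self_ne_succ (c i) this.symm

lemma update_inj {n : ℕ} (c : Fin n → Fin 2) :
    Function.Injective (fun i : Fin n => Function.update c i (c i + 1)) := by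
  intro i j hij
  by_contra hne
  have h1 := congrFun hij i
  simp only [] at h1
  rw [Function.update_self, Function.update_of_ne hne] at h1
  exact fin2_self_ne_succ (c i) h1.symm

lemma my_ball_sum {n : ℕ} (r : Finset (Fin n)) (c : Fin n → Fin 2) :
    ∑ v ∈ Finset.univ.filter (fun v => hammingDist v c ≤ 1), ∏ i ∈ r, stmtEps (v i)
      = (∏ i ∈ r, stmtEps (c i)) * (1 + ∑ i : Fin n, (if i ∈ r then (-1:ℤ) else 1)) := by
  have hterm : ∀ i : Fin n, ∏ j ∈ r, stmtEps (Function.update c i (c i + 1) j)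
      = (if i ∈ r then (-1:ℤ) else 1) * ∏ j ∈ r, stmtEps (c j) := by
    intro i
    by_cases hi : i ∈ r
    · rw [if_pos hi]
      have hcomp : ∀ j, stmtEps (Function.update c i (c i + 1) j)
          = Function.update (fun j => stmtEps (c j)) i (stmtEps (c i + 1)) j := by
        intro j
        rcases eq_or_ne j i with rfl | h
        · simp
        · simp [Function.update_of_ne h]
      calc ∏ j ∈ r, stmtEps (Function.update c i (c i + 1) j)
          = ∏ j ∈ r, Function.update (fun j => stmtEps (c j)) i (stmtEps (c i + 1)) j :=
            Finset.prod_congr rfl fun j _ => hcomp j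
        _ = stmtEps (c i + 1) * ∏ j ∈ r \ {i}, stmtEps (c j) :=
            Finset.prod_update_of_mem hi _ _
        _ = -(stmtEps (c i) * ∏ j ∈ r \ {i}, stmtEps (c j)) := by rw [stmtEps_succ]; ring
        _ = -(∏ j ∈ r, stmtEps (c j)) := by
            rw [← Finset.erase_eq, Finset.mul_prod_erase r (fun j => stmtEps (c j)) hi]
        _ = (-1) * ∏ j ∈ r, stmtEps (c j) := by ring
    · rw [if_neg hi, one_mul]
      apply Finset.prod_congr rfl
      intro j hj
      rw [Function.update_of_ne (by rintro rfl; exact hi hj)]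
  rw [my_ball_eq]
  rw [Finset.sum_insert (by
    simp only [Finset.mem_image, Finset.mem_univ, true_and, not_exists]
    intro i
    exact update_not_self c i)]
  rw [Finset.sum_image (fun i _ j _ h => update_inj c h)]
  rw [Finset.sum_congr rfl (fun i _ => hterm i)]
  rw [← Finset.sum_mul]
  ring

lemma my_key {n : ℕ} (C : Finset (Fin n → Fin 2))
    (hperf : ∀ v : Fin n → Fin 2, (C.filter (fun c => hammingDist v c ≤ 1)).card = 1)
    (r : Finset (Fin n)) :
    (∑ c ∈ C, ∏ i ∈ r, stmtEps (c i)) * (1 + ∑ i : Fin n, (if i ∈ r then (-1:ℤ) else 1))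
      = ∑ v : Fin n → Fin 2, ∏ i ∈ r, stmtEps (v i) := by
  symm
  calc ∑ v : Fin n → Fin 2, ∏ i ∈ r, stmtEps (v i)
      = ∑ v : Fin n → Fin 2,
          ((C.filter (fun c => hammingDist v c ≤ 1)).card : ℤ) * ∏ i ∈ r, stmtEps (v i) := by
        apply Finset.sum_congr rfl
        intro v _
        rw [hperf v]
        norm_num
    _ = ∑ v : Fin n → Fin 2, ∑ c ∈ C,
          (if hammingDist v c ≤ 1 then (∏ i ∈ r, stmtEps (v i)) else 0) := by
        apply Finset.sum_congr rfl
        intro v _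
        rw [Finset.card_filter]
        push_cast
        rw [Finset.sum_mul]
        apply Finset.sum_congr rfl
        intro c _
        rw [ite_mul, one_mul, zero_mul]
    _ = ∑ c ∈ C, ∑ v : Fin n → Fin 2,
          (if hammingDist v c ≤ 1 then (∏ i ∈ r, stmtEps (v i)) else 0) := Finset.sum_comm
    _ = ∑ c ∈ C, ∑ v ∈ Finset.univ.filter (fun v => hammingDist v c ≤ 1),
          ∏ i ∈ r, stmtEps (v i) := by
        apply Finset.sum_congr rfl
        intro c _
        rw [Finset.sum_filter]
    _ = ∑ c ∈ C, (∏ i ∈ r, stmtEps (c i)) * (1 + ∑ i : Fin n, (if i ∈ r then (-1:ℤ) else 1)) :=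
        Finset.sum_congr rfl fun c _ => my_ball_sum r c
    _ = (∑ c ∈ C, ∏ i ∈ r, stmtEps (c i)) * (1 + ∑ i : Fin n, (if i ∈ r then (-1:ℤ) else 1)) :=
        (Finset.sum_mul ..).symm

lemma sum_ite_sign {n : ℕ} (r : Finset (Fin n)) :
    ∑ i : Fin n, (if i ∈ r then (-1:ℤ) else 1) = (n : ℤ) - 2 * r.card := by
  have : ∀ i : Fin n, (if i ∈ r then (-1:ℤ) else 1)
      = 1 - 2 * (if i ∈ r then (1:ℤ) else 0) := by
    intro i; split <;> ring
  rw [Finset.sum_congr rfl fun i _ => this i]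
  rw [Finset.sum_sub_distrib, ← Finset.mul_sum, Finset.sum_boole]
  simp [Finset.filter_mem_eq_inter]

lemma my_card {n : ℕ} (C : Finset (Fin n → Fin 2))
    (hperf : ∀ v : Fin n → Fin 2, (C.filter (fun c => hammingDist v c ≤ 1)).card = 1) :
    C.card * (n + 1) = 2 ^ n := by
  have h := my_key C hperf ∅
  simp only [Finset.prod_empty, Finset.notMem_empty, if_false] at h
  rw [Finset.sum_const, Finset.sum_const, Finset.sum_const] at h
  simp only [Finset.card_univ, Fintype.card_pi, Fintype.card_fin, Finset.prod_const,
    Finset.card_univ, smul_eq_mul, mul_one, nsmul_eq_mul] at h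
  have h2 : (C.card : ℤ) * (n + 1) = 2 ^ n := by
    push_cast at h; linarith
  exact_mod_cast h2

lemma my_charsum {n : ℕ} (C : Finset (Fin n → Fin 2))
    (hperf : ∀ v : Fin n → Fin 2, (C.filter (fun c => hammingDist v c ≤ 1)).card = 1)
    (r : Finset (Fin n)) (hr : r.Nonempty) (hsize : 2 * r.card ≤ n) :
    ∑ c ∈ C, ∏ i ∈ r, stmtEps (c i) = 0 := by
  have h := my_key C hperf r
  rw [sum_chi_univ r hr, sum_ite_sign] at h
  have hK : (1 : ℤ) + ((n : ℤ) - 2 * r.card) ≠ 0 := by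
    have h1 : (2 * r.card : ℤ) ≤ n := by exact_mod_cast hsize
    have h2 : (0:ℤ) < 1 + ((n : ℤ) - 2 * r.card) := by linarith
    exact h2.ne'
  exact (mul_eq_zero.1 h).resolve_right hK

lemma my_strength {n : ℕ} (C : Finset (Fin n → Fin 2))
    (hperf : ∀ v : Fin n → Fin 2, (C.filter (fun c => hammingDist v c ≤ 1)).card = 1)
    (s : Finset (Fin n)) (hsize : 2 * s.card ≤ n) (g : Fin n → Fin 2) :
    ((C.filter (fun c => ∀ i ∈ s, c i = g i)).card : ℤ) * 2 ^ s.card = C.card := by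
  have key : ∀ c : Fin n → Fin 2, ∏ i ∈ s, (stmtEps (c i + g i) + 1)
      = if (∀ i ∈ s, c i = g i) then (2:ℤ) ^ s.card else 0 := by
    intro c
    by_cases hc : ∀ i ∈ s, c i = g i
    · rw [if_pos hc]
      have h2 : ∀ i ∈ s, stmtEps (c i + g i) + 1 = 2 := by
        intro i hi
        rw [hc i hi]
        have h3 : ∀ a : Fin 2, stmtEps (a + a) + 1 = 2 := by decide
        exact h3 (g i)
      rw [Finset.prod_congr rfl h2, Finset.prod_const]
    · rw [if_neg hc]
      push_neg at hc
      obtain ⟨i, hi, hne⟩ := hc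
      apply Finset.prod_eq_zero hi
      have : ∀ a b : Fin 2, a ≠ b → stmtEps (a + b) + 1 = 0 := by decide
      exact this _ _ hne
  have lhs : ∑ c ∈ C, ∏ i ∈ s, (stmtEps (c i + g i) + 1)
      = ((C.filter (fun c => ∀ i ∈ s, c i = g i)).card : ℤ) * 2 ^ s.card := by
    rw [Finset.sum_congr rfl fun c _ => key c]
    rw [Finset.sum_ite, Finset.sum_const, Finset.sum_const, smul_zero, add_zero,
      nsmul_eq_mul]
  have rhs : ∑ c ∈ C, ∏ i ∈ s, (stmtEps (c i + g i) + 1) = (C.card : ℤ) := by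
    have expand : ∀ c : Fin n → Fin 2, ∏ i ∈ s, (stmtEps (c i + g i) + 1)
        = ∑ r ∈ s.powerset, (∏ i ∈ r, stmtEps (g i)) * ∏ i ∈ r, stmtEps (c i) := by
      intro c
      rw [Finset.prod_add]
      apply Finset.sum_congr rfl
      intro r _
      rw [Finset.prod_const_one, mul_one]
      rw [← Finset.prod_mul_distrib]
      apply Finset.prod_congr rfl
      intro i _
      rw [stmtEps_add]
      ring
    rw [Finset.sum_congr rfl fun c _ => expand c, Finset.sum_comm]
    rw [Finset.sum_eq_single_of_mem ∅ (Finset.empty_mem_powerset s)]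
    · simp
    · intro r hr hrne
      have hrs := Finset.card_le_card (Finset.mem_powerset.1 hr)
      have hle : 2 * r.card ≤ n := le_trans (Nat.mul_le_mul_left 2 hrs) hsize
      rw [← Finset.mul_sum,
        my_charsum C hperf r (Finset.nonempty_of_ne_empty hrne) hle, mul_zero]
  rw [← lhs, rhs]


/-- Puncturing (deleting the last coordinate of) a 1-perfect binary code of
length n gives an orthogonal array OA(2^n/(n+1), n-1, 2, (n-1)/2). -/
theorem stmt_14 (n : ℕ) (C : Finset (Fin n → Fin 2))
    (hperf : ∀ v : Fin n → Fin 2, (C.filter (fun c => hammingDist v c ≤ 1)).card = 1) :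
    let P : Finset (Fin (n - 1) → Fin 2) :=
      C.image (fun c => fun i => c (Fin.castLE (Nat.sub_le n 1) i));
    P.card * (n + 1) = 2 ^ n ∧
    ∀ s : Finset (Fin (n - 1)), s.card = (n - 1) / 2 → ∀ g : Fin (n - 1) → Fin 2,
      (P.filter (fun x => ∀ i ∈ s, x i = g i)).card * 2 ^ ((n - 1) / 2) = P.card := by
  intro P
  have hinj : Set.InjOn
      (fun c : Fin n → Fin 2 => fun i : Fin (n-1) => c (Fin.castLE (Nat.sub_le n 1) i)) C := by
    intro c hc c' hc' h
    simp only [] at h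
    have hdist : hammingDist c c' ≤ 1 := by
      have hsub : Finset.univ.filter (fun i => c i ≠ c' i)
          ⊆ Finset.univ.filter (fun i : Fin n => ¬ ((i : ℕ) < n - 1)) := by
        intro i hi
        simp only [Finset.mem_filter, Finset.mem_univ, true_and] at hi ⊢
        intro hlt
        apply hi
        have h2 := congrFun h ⟨(i : ℕ), hlt⟩
        have h3 : Fin.castLE (Nat.sub_le n 1) (⟨(i : ℕ), hlt⟩ : Fin (n-1)) = i := by
          apply Fin.ext; rfl
        rwa [h3] at h2
      have hcard1 : (Finset.univ.filter (fun i : Fin n => ¬ ((i : ℕ) < n - 1))).card ≤ 1 := by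
        apply Finset.card_le_one.2
        intro a ha b hb
        simp only [Finset.mem_filter, Finset.mem_univ, true_and, not_lt] at ha hb
        have ha2 := a.isLt
        have hb2 := b.isLt
        apply Fin.ext
        omega
      calc hammingDist c c' = (Finset.univ.filter (fun i => c i ≠ c' i)).card := rfl
        _ ≤ _ := Finset.card_le_card hsub
        _ ≤ 1 := hcard1
    have h1 := hperf c
    rw [Finset.card_eq_one] at h1
    obtain ⟨a, ha⟩ := h1
    have hcmem : c ∈ C.filter (fun x => hammingDist c x ≤ 1) := by
      simp [Finset.mem_filter, Finset.mem_coe.1 hc, hammingDist_self]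
    have hc'mem : c' ∈ C.filter (fun x => hammingDist c x ≤ 1) := by
      simp [Finset.mem_filter, Finset.mem_coe.1 hc', hdist]
    rw [ha, Finset.mem_singleton] at hcmem hc'mem
    rw [hcmem, hc'mem]
  have hPcard : P.card = C.card := Finset.card_image_of_injOn hinj
  constructor
  · rw [hPcard]; exact my_card C hperf
  · intro s hs g
    set s' : Finset (Fin n) := s.image (Fin.castLE (Nat.sub_le n 1)) with hs'
    set g' : Fin n → Fin 2 := fun i => if h : (i : ℕ) < n - 1 then g ⟨(i : ℕ), h⟩ else 0
      with hg'
    have hs'card : s'.card = s.card :=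
      Finset.card_image_of_injective s (Fin.castLE_injective _)
    have hsize : 2 * s'.card ≤ n := by rw [hs'card, hs]; omega
    have hgval : ∀ i : Fin (n-1), g' (Fin.castLE (Nat.sub_le n 1) i) = g i := by
      intro i
      have hlt : ((Fin.castLE (Nat.sub_le n 1) i : Fin n) : ℕ) < n - 1 := i.isLt
      rw [hg']
      simp only [dif_pos hlt]
      congr 1
    have hfilt : P.filter (fun x => ∀ i ∈ s, x i = g i)
        = (C.filter (fun c => ∀ i ∈ s', c i = g' i)).image
            (fun c => fun i : Fin (n-1) => c (Fin.castLE (Nat.sub_le n 1) i)) := by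
      show (C.image _).filter _ = _
      rw [Finset.filter_image]
      congr 1
      apply Finset.filter_congr
      intro c _
      constructor
      · intro hag j hj
        obtain ⟨i, hi, rfl⟩ := Finset.mem_image.1 hj
        rw [hgval i]
        exact hag i hi
      · intro hag i hi
        have := hag _ (Finset.mem_image_of_mem _ hi)
        rwa [hgval i] at this
    have hkey := my_strength C hperf s' hsize g'
    rw [hfilt, Finset.card_image_of_injOn (hinj.mono (Finset.filter_subset _ C)), hPcard]
    rw [hs'card, hs] at hkey
    exact_mod_cast hkey
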